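/- For every j : Fin 5, the set O j has exactly 6 elements, every element of O j is at Euclidean distance 1 from the centroid of O j, and each v ∈ O j is at distance 2 from exactly one other element of O j and at distance √2 from each of the remaining four; i.e., each octahedral facet of the rectified 5-cell is a regular octahedron with edge length √2. -/

import Mathlib

noncomputable section

/-- The vertex set of the Euclidean rectified 5-cell: all coordinate
permutations of the point `(1,1,1,0,0)`. -/
def V : Set (EuclideanSpace ℝ (Fin 5)) :=
  {x | (∀ i, x i = 0 ∨ x i = 1) ∧ (∑ i, x i) = 3}

/-- The vertex set of the octahedral facet labelled `j`. -/
def O (j : Fin 5) : Set (EuclideanSpace ℝ (Fin 5)) := {v ∈ V | v j = 1}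

/-!
A vertex of `O j` is the indicator vector of a 3-set `s ∋ j` of coordinates, i.e. of a 2-subset of
the four coordinates other than `j`, so there are `C(4,2) = 6` of them. The squared distance
between two indicator vectors is `#(s ∆ t)`; here `s ∆ t ⊆ {j}ᶜ` and `#(s ∆ t) = 6 - 2 #(s ∩ t)`
is even, so it is `2` or `4`, and it is `4` exactly when `s ∆ t = {j}ᶜ`, i.e. `t = s ∆ {j}ᶜ`:
this is the antipode. Every coordinate other than `j` lies in three of the six sets, so the
centroid has coordinate `1` at `j` and `1/2` elsewhere, at squared distance `4 · 1/4 = 1` from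
every vertex.
-/

open Finset
open scoped symmDiff

namespace Finset

variable {α : Type*} [DecidableEq α]

theorem card_symmDiff_add_two_mul_card_inter (s t : Finset α) :
    #(s ∆ t) + 2 * #(s ∩ t) = #s + #t := by
  rw [symmDiff_eq_sup_sdiff_inf, sup_eq_union, inf_eq_inter,
    card_sdiff_of_subset inter_subset_union, ← card_union_add_card_inter]
  have := card_le_card (inter_subset_union (s := s) (t := t))
  omega

theorem symmDiff_subset_compl_singleton [Fintype α] {s t : Finset α} {j : α}
    (hs : j ∈ s) (ht : j ∈ t) : s ∆ t ⊆ {j}ᶜ := by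
  intro i hi
  rw [mem_symmDiff] at hi
  rw [mem_compl, mem_singleton]
  rintro rfl
  tauto

end Finset

section IndicatorVector

variable {ι : Type*} [DecidableEq ι]

def indicatorVec (s : Finset ι) : EuclideanSpace ℝ ι :=
  WithLp.toLp 2 fun i => if i ∈ s then 1 else 0

@[simp]
theorem indicatorVec_apply (s : Finset ι) (i : ι) :
    indicatorVec s i = if i ∈ s then 1 else 0 := rfl

theorem indicatorVec_injective : Function.Injective (indicatorVec (ι := ι)) := by
  intro s t h
  ext i
  have hi : indicatorVec s i = indicatorVec t i := by rw [h]
  by_cases hs : i ∈ s <;> by_cases ht : i ∈ t <;> simp [hs, ht] at hi ⊢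

variable [Fintype ι]

theorem sum_indicatorVec_apply (s : Finset ι) : ∑ i, indicatorVec s i = #s := by
  simp

theorem eq_indicatorVec_of_forall_eq_zero_or_eq_one {x : EuclideanSpace ℝ ι}
    (hx : ∀ i, x i = 0 ∨ x i = 1) : x = indicatorVec {i | x i = 1} := by
  ext i
  rcases hx i with h | h <;> simp [h]

theorem dist_indicatorVec (s t : Finset ι) :
    dist (indicatorVec s) (indicatorVec t) = √(#(s ∆ t) : ℝ) := by
  rw [EuclideanSpace.dist_eq, ← sum_indicatorVec_apply]
  congr 1
  refine sum_congr rfl fun i _ => ?_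
  by_cases hs : i ∈ s <;> by_cases ht : i ∈ t <;> simp [hs, ht, mem_symmDiff]

theorem dist_indicatorVec_eq_two_iff {s t : Finset ι} :
    dist (indicatorVec s) (indicatorVec t) = 2 ↔ #(s ∆ t) = 4 := by
  rw [dist_indicatorVec, Real.sqrt_eq_iff_eq_sq (by positivity) zero_le_two]
  norm_cast

end IndicatorVector

namespace RectifiedFiveCell

def facet (j : Fin 5) : Finset (Finset (Fin 5)) := {s | #s = 3 ∧ j ∈ s}

theorem mem_facet {j : Fin 5} {s : Finset (Fin 5)} : s ∈ facet j ↔ #s = 3 ∧ j ∈ s := by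
  simp [facet]

theorem card_facet (j : Fin 5) : #(facet j) = 6 := by
  fin_cases j <;> decide

theorem card_filter_mem_facet (j i : Fin 5) :
    #{s ∈ facet j | i ∈ s} = if i = j then 6 else 3 := by
  fin_cases j <;> fin_cases i <;> decide

theorem O_eq_image_facet (j : Fin 5) :
    O j = indicatorVec '' (facet j : Set (Finset (Fin 5))) := by
  ext x
  simp only [Set.mem_image, mem_coe, mem_facet]
  constructor
  · rintro ⟨⟨h01, hsum⟩, hj⟩
    have hx := eq_indicatorVec_of_forall_eq_zero_or_eq_one h01
    refine ⟨_, ⟨?_, by simpa using hj⟩, hx.symm⟩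
    rw [hx, sum_indicatorVec_apply] at hsum
    exact_mod_cast hsum
  · rintro ⟨s, ⟨hcard, hj⟩, rfl⟩
    refine ⟨⟨fun i => ?_, by simp [hcard]⟩, by simp [hj]⟩
    by_cases h : i ∈ s <;> simp [h]

theorem card_compl_singleton (j : Fin 5) : #({j}ᶜ : Finset (Fin 5)) = 4 := by
  rw [card_compl, card_singleton, Fintype.card_fin]

theorem finsum_mem_O (j : Fin 5) : ∑ᶠ w ∈ O j, w = ∑ s ∈ facet j, indicatorVec s := by
  rw [O_eq_image_facet, finsum_mem_image indicatorVec_injective.injOn, finsum_mem_coe_finset]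

theorem centroid_O_apply (j i : Fin 5) :
    ((6 : ℝ)⁻¹ • ∑ᶠ w ∈ O j, w) i = if i = j then 1 else 1 / 2 := by
  rw [finsum_mem_O, PiLp.smul_apply, WithLp.ofLp_sum, Finset.sum_apply]
  simp only [indicatorVec_apply, sum_boole, card_filter_mem_facet, smul_eq_mul]
  split_ifs <;> norm_num

variable {j : Fin 5} {s t : Finset (Fin 5)}

def antipode (j : Fin 5) (s : Finset (Fin 5)) : Finset (Fin 5) := s ∆ {j}ᶜ

theorem antipode_mem_facet (hs : s ∈ facet j) : antipode j s ∈ facet j := by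
  rw [mem_facet] at hs ⊢
  have hinter : s ∩ {j}ᶜ = s.erase j := by ext; simp [and_comm]
  have := card_symmDiff_add_two_mul_card_inter s {j}ᶜ
  rw [hinter, card_erase_of_mem hs.2, hs.1, card_compl_singleton] at this
  refine ⟨by simpa [antipode] using this, ?_⟩
  simp [antipode, mem_symmDiff, hs.2]

theorem antipode_ne_self (j : Fin 5) (s : Finset (Fin 5)) : antipode j s ≠ s := by
  rw [antipode, Ne, symmDiff_eq_left, bot_eq_empty, ← card_eq_zero, card_compl_singleton]
  decide

theorem card_symmDiff_eq_four_iff (hs : s ∈ facet j) (ht : t ∈ facet j) :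
    #(s ∆ t) = 4 ↔ t = antipode j s := by
  have hsub := symmDiff_subset_compl_singleton (mem_facet.1 hs).2 (mem_facet.1 ht).2
  constructor
  · intro h
    rw [antipode, ← eq_of_subset_of_card_le hsub (by rw [card_compl_singleton, h]),
      symmDiff_symmDiff_cancel_left]
  · rintro rfl
    rw [antipode, symmDiff_symmDiff_cancel_left, card_compl_singleton]

theorem card_symmDiff_eq_two_or_four (hs : s ∈ facet j) (ht : t ∈ facet j) (hst : s ≠ t) :
    #(s ∆ t) = 2 ∨ #(s ∆ t) = 4 := by
  have hle : #(s ∆ t) ≤ 4 := by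
    simpa [card_compl_singleton] using
      card_le_card (symmDiff_subset_compl_singleton (mem_facet.1 hs).2 (mem_facet.1 ht).2)
  have hpos : #(s ∆ t) ≠ 0 := by simpa [symmDiff_eq_bot] using hst
  have := card_symmDiff_add_two_mul_card_inter s t
  rw [(mem_facet.1 hs).1, (mem_facet.1 ht).1] at this
  omega

theorem dist_indicatorVec_centroid_O (hs : s ∈ facet j) :
    dist (indicatorVec s) ((6 : ℝ)⁻¹ • ∑ᶠ w ∈ O j, w) = 1 := by
  have hterm : ∀ i, dist (indicatorVec s i) (((6 : ℝ)⁻¹ • ∑ᶠ w ∈ O j, w) i) ^ 2 =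
      if i = j then 0 else 1 / 4 := by
    intro i
    rw [centroid_O_apply, indicatorVec_apply, Real.dist_eq, sq_abs]
    obtain rfl | hij := eq_or_ne i j
    · simp [(mem_facet.1 hs).2]
    · split_ifs <;> norm_num
  rw [EuclideanSpace.dist_eq, sum_congr rfl fun i _ => hterm i, sum_ite, sum_const_zero, zero_add,
    sum_const, filter_ne', card_erase_of_mem (mem_univ j), card_univ, Fintype.card_fin]
  norm_num

end RectifiedFiveCell

open RectifiedFiveCell

theorem octahedral_facet_regular (j : Fin 5) :
    (O j).ncard = 6 ∧
    (∀ v ∈ O j, dist v ((6 : ℝ)⁻¹ • ∑ᶠ w ∈ O j, w) = 1) ∧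
    (∀ v ∈ O j, ∃! w, w ∈ O j ∧ w ≠ v ∧ dist v w = 2) ∧
    (∀ v ∈ O j, ∀ w ∈ O j, w ≠ v → dist v w = 2 ∨ dist v w = Real.sqrt 2) := by
  have hO := O_eq_image_facet j
  refine ⟨?_, fun v hv => ?_, fun v hv => ?_, fun v hv w hw hne => ?_⟩
  · rw [hO, Set.ncard_image_of_injective _ indicatorVec_injective, Set.ncard_coe_finset, card_facet]
  · obtain ⟨s, hs, rfl⟩ := hO ▸ hv
    exact dist_indicatorVec_centroid_O hs
  · obtain ⟨s, hs, rfl⟩ := hO ▸ hv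
    have hanti := antipode_mem_facet hs
    refine ⟨indicatorVec (antipode j s), ⟨hO ▸ ⟨_, hanti, rfl⟩,
      indicatorVec_injective.ne (antipode_ne_self j s), ?_⟩, ?_⟩
    · rw [dist_indicatorVec_eq_two_iff, card_symmDiff_eq_four_iff hs hanti]
    · rintro w ⟨hw, -, hdist⟩
      obtain ⟨t, ht, rfl⟩ := hO ▸ hw
      rw [dist_indicatorVec_eq_two_iff, card_symmDiff_eq_four_iff hs ht] at hdist
      rw [hdist]
  · obtain ⟨s, hs, rfl⟩ := hO ▸ hv
    obtain ⟨t, ht, rfl⟩ := hO ▸ hw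
    rw [dist_indicatorVec_eq_two_iff, dist_indicatorVec]
    rcases card_symmDiff_eq_two_or_four hs ht (fun h => hne (h ▸ rfl)) with h | h <;> simp [h]
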